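/- (Upper bound of Lemma 2 in the paper.) For any error e with syndrome s, any codeword c, and any β > 0, ΔF_c^max(s;β) = β^{−1} log(Z_max(s;β)/Z_{c_max(e)+c}(e;β)) ≤ 2 d_c, where d_c = min over degeneracy vectors σ of wgt(c + σG) is the minimum weight in the equivalence class of c. -/
import Mathlib

open Finset

lemma zmod2_em (a : ZMod 2) : a = 0 ∨ a = 1 := by revert a; decide

lemma neg_one_pow_val_add (a b : ZMod 2) :
    ((-1:ℝ))^((a+b).val) = (-1:ℝ)^a.val * (-1:ℝ)^b.val := by
  rcases zmod2_em a with ha | ha <;> rcases zmod2_em b with hb | hb <;>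
    subst ha <;> subst hb <;>
    norm_num [ZMod.val_one, show (ZMod.val (2:ZMod 2)) = 0 from rfl, show (ZMod.val (0:ZMod 2)) = 0 from rfl]

lemma neg_one_pow_val_mul (a b : ZMod 2) :
    ((-1:ℝ))^((a*b).val) = ((-1:ℝ)^a.val)^b.val := by
  rcases zmod2_em a with ha | ha <;> rcases zmod2_em b with hb | hb <;>
    subst ha <;> subst hb <;>
    norm_num [ZMod.val_one, show (ZMod.val (2:ZMod 2)) = 0 from rfl, show (ZMod.val (0:ZMod 2)) = 0 from rfl]

lemma neg_one_pow_val_sum {ι : Type*} (s : Finset ι) (f : ι → ZMod 2) :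
    ((-1:ℝ))^((∑ i ∈ s, f i).val) = ∏ i ∈ s, (-1:ℝ)^(f i).val := by
  induction s using Finset.cons_induction with
  | empty => simp
  | cons a s ha ih => rw [Finset.sum_cons, Finset.prod_cons, neg_one_pow_val_add, ih]

lemma abs_P {Ns N : ℕ} (G : Fin Ns → Fin N → ZMod 2) (τ : Fin Ns → Bool) (b : Fin N) :
    |∏ r, ((if τ r then (1:ℝ) else -1) ^ (G r b).val)| = 1 := by
  rw [Finset.abs_prod]
  refine Finset.prod_eq_one fun r _ => ?_
  rw [abs_pow]
  cases τ r <;> simp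

/-- Invariance of `Z` under adding a row-space vector. -/
lemma Z_inv {Ns N : ℕ}
    (G : Fin Ns → Fin N → ZMod 2) (β : ℝ)
    (Z : (Fin N → ZMod 2) → ℝ)
    (hZ : ∀ x, Z x = ∑ σ : Fin Ns → Bool,
      Real.exp (β * ∑ b, (-1 : ℝ) ^ (x b).val *
        ∏ r, ((if σ r then (1 : ℝ) else -1) ^ (G r b).val)))
    (x : Fin N → ZMod 2) (σ : Fin Ns → ZMod 2) :
    Z (x + fun b => ∑ r, σ r * G r b) = Z x := by
  rw [hZ, hZ]
  have hinv : Function.Involutive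
      (fun (τ : Fin Ns → Bool) => fun r => xor (τ r) (decide (σ r = 1))) := by
    intro τ
    funext r
    simp [Bool.xor_assoc]
  refine Fintype.sum_equiv (Function.Involutive.toPerm _ hinv) _ _ fun τ => ?_
  congr 1
  congr 1
  refine Finset.sum_congr rfl fun b _ => ?_
  have hxb : ((x + fun b => ∑ r, σ r * G r b) b) = x b + ∑ r, σ r * G r b := rfl
  rw [hxb, neg_one_pow_val_add, neg_one_pow_val_sum]
  rw [mul_assoc]
  congr 1
  -- goal : (∏ r, (-1)^(σ r * G r b).val) * P τ b = P (flip τ) b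
  rw [← Finset.prod_mul_distrib]
  refine Finset.prod_congr rfl fun r _ => ?_
  rw [neg_one_pow_val_mul, ← mul_pow]
  congr 1
  show (-1:ℝ)^(σ r).val * (if τ r then (1:ℝ) else -1)
      = (if xor (τ r) (decide (σ r = 1)) then (1:ℝ) else -1)
  rcases zmod2_em (σ r) with h | h <;> rw [h] <;> cases τ r <;>
      norm_num [ZMod.val_one, show (ZMod.val (0:ZMod 2)) = 0 from rfl]

/-- Lipschitz comparison of `Z` at two points. -/
lemma Z_le {Ns N : ℕ}
    (G : Fin Ns → Fin N → ZMod 2) (β : ℝ) (hβ : 0 ≤ β)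
    (Z : (Fin N → ZMod 2) → ℝ)
    (hZ : ∀ x, Z x = ∑ σ : Fin Ns → Bool,
      Real.exp (β * ∑ b, (-1 : ℝ) ^ (x b).val *
        ∏ r, ((if σ r then (1 : ℝ) else -1) ^ (G r b).val)))
    (x y : Fin N → ZMod 2) :
    Z x ≤ Real.exp (β * (2 * (Finset.univ.filter (fun b => x b + y b ≠ 0)).card)) * Z y := by
  rw [hZ, hZ, Finset.mul_sum]
  refine Finset.sum_le_sum fun τ _ => ?_
  rw [← Real.exp_add, Real.exp_le_exp, ← mul_add]
  refine mul_le_mul_of_nonneg_left ?_ hβ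
  have hle : ∀ b : Fin N,
      (-1:ℝ)^((x b).val) * (∏ r, ((if τ r then (1:ℝ) else -1) ^ (G r b).val))
        - (-1:ℝ)^((y b).val) * (∏ r, ((if τ r then (1:ℝ) else -1) ^ (G r b).val))
      ≤ if x b + y b ≠ 0 then (2:ℝ) else 0 := by
    intro b
    by_cases h : x b + y b = 0
    · have hxy : x b = y b := by
        rcases zmod2_em (x b) with h1 | h1 <;> rcases zmod2_em (y b) with h2 | h2 <;>
          rw [h1, h2] at h ⊢ <;> first | rfl | simp_all | revert h ; decide
      simp only [hxy, sub_self]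
      split <;> norm_num
    · simp only [h, if_pos, ne_eq, not_false_iff, if_true]
      rw [← sub_mul]
      calc ((-1:ℝ)^((x b).val) - (-1:ℝ)^((y b).val)) *
            (∏ r, ((if τ r then (1:ℝ) else -1) ^ (G r b).val))
          ≤ |((-1:ℝ)^((x b).val) - (-1:ℝ)^((y b).val)) *
            (∏ r, ((if τ r then (1:ℝ) else -1) ^ (G r b).val))| := le_abs_self _
        _ = |(-1:ℝ)^((x b).val) - (-1:ℝ)^((y b).val)| := by
            rw [abs_mul, abs_P, mul_one]
        _ ≤ |(-1:ℝ)^((x b).val)| + |(-1:ℝ)^((y b).val)| := abs_sub _ _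
        _ ≤ 2 := by
            rw [abs_pow, abs_pow]
            norm_num
  have hmain : (∑ b, ((-1:ℝ)^((x b).val) * (∏ r, ((if τ r then (1:ℝ) else -1) ^ (G r b).val))
        - (-1:ℝ)^((y b).val) * (∏ r, ((if τ r then (1:ℝ) else -1) ^ (G r b).val))))
      ≤ 2 * (Finset.univ.filter (fun b => x b + y b ≠ 0)).card := by
    calc (∑ b, ((-1:ℝ)^((x b).val) * (∏ r, ((if τ r then (1:ℝ) else -1) ^ (G r b).val))
          - (-1:ℝ)^((y b).val) * (∏ r, ((if τ r then (1:ℝ) else -1) ^ (G r b).val))))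
        ≤ ∑ b, (if x b + y b ≠ 0 then (2:ℝ) else 0) :=
          Finset.sum_le_sum fun b _ => hle b
      _ = 2 * (Finset.univ.filter (fun b => x b + y b ≠ 0)).card := by
          rw [← Finset.sum_filter, Finset.sum_const, nsmul_eq_mul, mul_comm]
  rw [Finset.sum_sub_distrib] at hmain
  linarith

/-- upper bound of Lemma 2: for the spin model with generator
matrix `G`, any error `e`, any codeword `c`, and `β > 0`,
`ΔF_c^max(s;β) = β⁻¹ log(Z_max(s;β)/Z_{c_max(e)+c}(e;β)) ≤ 2 d_c`, where
`d_c = min_σ wgt(c + σG)` is the minimum weight in the equivalence class of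
`c`, and `Z_max(s;β) = Z_{c_max}(e;β)` is the maximum over codewords in `C`. -/
theorem stmt8 {Ns N : ℕ}
    (G : Fin Ns → Fin N → ZMod 2)
    (β : ℝ) (hβ : 0 < β)
    (Z : (Fin N → ZMod 2) → ℝ)
    (hZ : ∀ x, Z x = ∑ σ : Fin Ns → Bool,
      Real.exp (β * ∑ b, (-1 : ℝ) ^ (x b).val *
        ∏ r, ((if σ r then (1 : ℝ) else -1) ^ (G r b).val)))
    (C : Finset (Fin N → ZMod 2))
    (e : Fin N → ZMod 2)
    (cmax : Fin N → ZMod 2) (hcmaxC : cmax ∈ C)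
    (hmax : ∀ b ∈ C, Z (e + b) ≤ Z (e + cmax))
    (c : Fin N → ZMod 2) (hcC : c ∈ C)
    (dc : ℕ)
    (hdc : dc = Finset.univ.inf' Finset.univ_nonempty (fun σ : Fin Ns → ZMod 2 =>
      (Finset.univ.filter
        (fun b => c b + ∑ r, σ r * G r b ≠ 0)).card)) :
    β⁻¹ * Real.log (Z (e + cmax) / Z (e + cmax + c)) ≤ 2 * dc := by
  -- positivity of Z
  have hZpos : ∀ x, 0 < Z x := by
    intro x
    rw [hZ]
    exact Finset.sum_pos (fun τ _ => Real.exp_pos _) Finset.univ_nonempty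
  -- choose minimizing σ₀
  obtain ⟨σ₀, -, hσ₀⟩ := Finset.exists_mem_eq_inf' (Finset.univ_nonempty)
      (fun σ : Fin Ns → ZMod 2 =>
        (Finset.univ.filter (fun b => c b + ∑ r, σ r * G r b ≠ 0)).card)
  rw [← hdc] at hσ₀
  -- invariance
  have hinv : Z (e + cmax + c) = Z ((e + cmax + c) + fun b => ∑ r, σ₀ r * G r b) :=
    (Z_inv G β Z hZ _ σ₀).symm
  -- comparison
  have hcard : (Finset.univ.filter
      (fun b => (e + cmax) b + ((e + cmax + c) + fun b => ∑ r, σ₀ r * G r b) b ≠ 0)).card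
      = dc := by
    rw [hσ₀]
    congr 1
    refine Finset.filter_congr fun b _ => ?_
    have : (e + cmax) b + ((e + cmax + c) + fun b => ∑ r, σ₀ r * G r b) b
        = c b + ∑ r, σ₀ r * G r b := by
      show (e b + cmax b) + ((e b + cmax b + c b) + ∑ r, σ₀ r * G r b)
          = c b + ∑ r, σ₀ r * G r b
      generalize e b + cmax b = a
      generalize c b = u
      generalize (∑ r, σ₀ r * G r b) = v
      revert a u v; decide
    rw [this]
  have hkey : Z (e + cmax) ≤ Real.exp (β * (2 * dc)) * Z (e + cmax + c) := by
    have := Z_le G β hβ.le Z hZ (e + cmax) ((e + cmax + c) + fun b => ∑ r, σ₀ r * G r b)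
    rw [hcard, ← hinv] at this
    exact this
  -- conclude
  have hdiv : Z (e + cmax) / Z (e + cmax + c) ≤ Real.exp (β * (2 * dc)) :=
    (div_le_iff₀ (hZpos _)).mpr hkey
  have hlog : Real.log (Z (e + cmax) / Z (e + cmax + c)) ≤ β * (2 * dc) := by
    calc Real.log (Z (e + cmax) / Z (e + cmax + c))
        ≤ Real.log (Real.exp (β * (2 * dc))) :=
          Real.log_le_log (div_pos (hZpos _) (hZpos _)) hdiv
      _ = β * (2 * dc) := Real.log_exp _
  calc β⁻¹ * Real.log (Z (e + cmax) / Z (e + cmax + c))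
      ≤ β⁻¹ * (β * (2 * dc)) := by
        exact mul_le_mul_of_nonneg_left hlog (inv_nonneg.mpr hβ.le)
    _ = 2 * dc := by field_simp
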